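/- arXiv:1811.12184 — 6 statements merged into one kernel-verified Lean document; each statement's English description precedes it below -/
import Mathlib

section
/- Let u, v be negative integers and H = ℍ[ℚ,u,v] the quaternion algebra over ℚ with i² = u, j² = v. Let a ∈ H and n ∈ ℚ with normSq a = n and 1 < n, and let z be an invertible element (a unit) of H. Then normSq(z − a) < 1 if and only if normSq(z⁻¹ − (n−1)⁻¹ • ā) < ((n−1)⁻¹)², where ā is the quaternion conjugate of a. -/
/-!
Write `N` for `qNormSq` and `c = (n - 1)⁻¹`. Since `z⁻¹ = N(z)⁻¹ • z̄`, expanding both norms with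
`N(x - y) = N(x) + N(y) - 2 Re(x ȳ)` gives the identity
`N(z⁻¹ - c • ā) - c² = c / N(z) * (N(z - a) - 1)`.
For `u, v < 0` the norm form is positive semidefinite, and `N(z) ≠ 0` because `z` is a unit, so the
factor `c / N(z)` is positive and the two inequalities are equivalent.
-/

open Quaternion

/-- The (reduced) norm `a * ā` of an element of a rational quaternion algebra,
viewed as a rational number via its real component. -/
noncomputable def qNormSq {u v : ℚ} (a : ℍ[ℚ, u, v]) : ℚ := (a * star a).re

namespace QuaternionAlgebra

variable {u v : ℚ}

theorem coe_qNormSq (a : ℍ[ℚ, u, v]) : (qNormSq a : ℍ[ℚ, u, v]) = a * star a :=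
  (mul_star_eq_coe a).symm

theorem qNormSq_def' (a : ℍ[ℚ, u, v]) :
    qNormSq a = a.re ^ 2 - u * a.imI ^ 2 - v * a.imJ ^ 2 + u * v * a.imK ^ 2 := by
  simp only [qNormSq, re_mul, re_star, imI_star, imJ_star, imK_star]
  ring

theorem qNormSq_nonneg (hu : u ≤ 0) (hv : v ≤ 0) (a : ℍ[ℚ, u, v]) : 0 ≤ qNormSq a := by
  have hI : 0 ≤ -u * a.imI ^ 2 := mul_nonneg (neg_nonneg.2 hu) (sq_nonneg _)
  have hJ : 0 ≤ -v * a.imJ ^ 2 := mul_nonneg (neg_nonneg.2 hv) (sq_nonneg _)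
  have hK : 0 ≤ u * v * a.imK ^ 2 :=
    mul_nonneg (mul_nonneg_of_nonpos_of_nonpos hu hv) (sq_nonneg _)
  rw [qNormSq_def']
  linarith [sq_nonneg a.re]

theorem qNormSq_mul (a b : ℍ[ℚ, u, v]) : qNormSq (a * b) = qNormSq a * qNormSq b := by
  apply coe_injective (c₁ := u) (c₂ := 0) (c₃ := v)
  calc (qNormSq (a * b) : ℍ[ℚ, u, v]) = a * (b * star b) * star a := by
        rw [coe_qNormSq, star_mul, mul_assoc, mul_assoc, mul_assoc]
    _ = a * star a * qNormSq b := by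
        rw [← coe_qNormSq, ← coe_commutes, mul_assoc, coe_commutes]
    _ = ((qNormSq a * qNormSq b : ℚ) : ℍ[ℚ, u, v]) := by rw [coe_mul, coe_qNormSq a]

theorem qNormSq_one : qNormSq (1 : ℍ[ℚ, u, v]) = 1 := by
  simp [qNormSq]

theorem qNormSq_units_ne_zero (z : (ℍ[ℚ, u, v])ˣ) : qNormSq (z : ℍ[ℚ, u, v]) ≠ 0 :=
  left_ne_zero_of_mul_eq_one (b := qNormSq (↑z⁻¹ : ℍ[ℚ, u, v])) <| by
    rw [← qNormSq_mul, Units.mul_inv, qNormSq_one]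

theorem val_inv_eq_inv_qNormSq_smul_star (z : (ℍ[ℚ, u, v])ˣ) :
    (↑z⁻¹ : ℍ[ℚ, u, v]) = (qNormSq (z : ℍ[ℚ, u, v]))⁻¹ • star (z : ℍ[ℚ, u, v]) := by
  apply Units.inv_eq_of_mul_eq_one_right
  rw [mul_smul_comm, ← coe_qNormSq, ← coe_mul_eq_smul, ← coe_mul,
    inv_mul_cancel₀ (qNormSq_units_ne_zero z), coe_one]

theorem qNormSq_star (a : ℍ[ℚ, u, v]) : qNormSq (star a) = qNormSq a := by
  simp [qNormSq_def']

theorem qNormSq_smul (r : ℚ) (a : ℍ[ℚ, u, v]) : qNormSq (r • a) = r ^ 2 * qNormSq a := by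
  simp only [qNormSq_def', re_smul, imI_smul, imJ_smul, imK_smul, smul_eq_mul]
  ring

theorem qNormSq_sub (a b : ℍ[ℚ, u, v]) :
    qNormSq (a - b) = qNormSq a + qNormSq b - 2 * (a * star b).re := by
  simp only [qNormSq, re_mul, re_star, imI_star, imJ_star, imK_star, re_sub, imI_sub, imJ_sub,
    imK_sub]
  ring

theorem re_star_mul (a b : ℍ[ℚ, u, v]) : (star a * b).re = (a * star b).re := by
  simp only [re_mul, re_star, imI_star, imJ_star, imK_star]
  ring

theorem qNormSq_val_inv_sub_smul_star_sub_sq (z : (ℍ[ℚ, u, v])ˣ) (a : ℍ[ℚ, u, v])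
    (ha : qNormSq a ≠ 1) :
    qNormSq ((↑z⁻¹ : ℍ[ℚ, u, v]) - (qNormSq a - 1)⁻¹ • star a) - ((qNormSq a - 1)⁻¹) ^ 2 =
      (qNormSq a - 1)⁻¹ / qNormSq (z : ℍ[ℚ, u, v]) * (qNormSq ((z : ℍ[ℚ, u, v]) - a) - 1) := by
  have hz := qNormSq_units_ne_zero z
  have ha' : qNormSq a - 1 ≠ 0 := sub_ne_zero.2 ha
  rw [val_inv_eq_inv_qNormSq_smul_star, qNormSq_sub, qNormSq_sub, qNormSq_smul, qNormSq_smul,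
    qNormSq_star, qNormSq_star, star_smul', star_star, smul_mul_smul_comm, re_smul, re_star_mul,
    smul_eq_mul]
  field_simp
  ring

end QuaternionAlgebra

open QuaternionAlgebra in
/-- Let `u, v` be negative integers, `H = ℍ[ℚ, u, v]`, `a ∈ H` with
`normSq a = n` and `1 < n`, and let `z` be a unit of `H`. Then `normSq (z - a) < 1` iff
`normSq (z⁻¹ - (n-1)⁻¹ • ā) < ((n-1)⁻¹)²`. -/
theorem norm_lemma_quaternion (u v : ℤ) (hu : u < 0) (hv : v < 0)
    (a : ℍ[ℚ, (u : ℚ), (v : ℚ)]) (n : ℚ) (ha : qNormSq a = n) (hn : 1 < n)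
    (z : (ℍ[ℚ, (u : ℚ), (v : ℚ)])ˣ) :
    qNormSq ((z : ℍ[ℚ, (u : ℚ), (v : ℚ)]) - a) < 1 ↔
      qNormSq (((z⁻¹ : (ℍ[ℚ, (u : ℚ), (v : ℚ)])ˣ) : ℍ[ℚ, (u : ℚ), (v : ℚ)])
          - (n - 1)⁻¹ • star a) < ((n - 1)⁻¹) ^ 2 := by
  subst ha
  have hz : 0 < qNormSq (z : ℍ[ℚ, (u : ℚ), (v : ℚ)]) :=
    (qNormSq_nonneg (by exact_mod_cast hu.le) (by exact_mod_cast hv.le) _).lt_of_ne'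
      (qNormSq_units_ne_zero z)
  have hc : 0 < (qNormSq a - 1)⁻¹ / qNormSq (z : ℍ[ℚ, (u : ℚ), (v : ℚ)]) :=
    div_pos (inv_pos.2 (sub_pos.2 hn)) hz
  rw [← sub_neg, ← mul_lt_mul_iff_right₀ hc, mul_zero,
    ← qNormSq_val_inv_sub_smul_star_sub_sq z a hn.ne', sub_neg]
end

section
/- Let O be an order in a finite-dimensional division ℚ-algebra such that the unit group Oˣ is finite. Then the abelianization of the group GE₂(O) is finite. -/
/-- The subgroup of `GL₂(R)` generated by the elementary matrices
`1 + r·e₁₂` and `1 + r·e₂₁`. -/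
def E2 (R : Type*) [Ring R] : Subgroup (Matrix (Fin 2) (Fin 2) R)ˣ :=
  Subgroup.closure {M : (Matrix (Fin 2) (Fin 2) R)ˣ | ∃ r : R,
    M.val = 1 + Matrix.single 0 1 r ∨
    M.val = 1 + Matrix.single 1 0 r}

/-- The subgroup of `GL₂(R)` of invertible diagonal matrices `diag(α, β)`, `α, β ∈ Rˣ`. -/
def D2 (R : Type*) [Ring R] : Subgroup (Matrix (Fin 2) (Fin 2) R)ˣ :=
  Subgroup.closure {M : (Matrix (Fin 2) (Fin 2) R)ˣ | ∃ α β : Rˣ,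
    M.val = Matrix.diagonal ![(α : R), (β : R)]}

/-- The subgroup of `GL₂(R)` generated by `E₂(R)` and the invertible diagonal matrices. -/
def GE2 (R : Type*) [Ring R] : Subgroup (Matrix (Fin 2) (Fin 2) R)ˣ := E2 R ⊔ D2 R

/-!
Conjugating `1 + c eᵢⱼ` by the diagonal matrix with `-1` at `i` and `1` elsewhere gives
`1 - c eᵢⱼ`, its inverse, so the image of every elementary matrix in the abelianization has order
at most two. The abelianization of `GE₂(R)` is the image of `R × R × (Rˣ)²` under a homomorphism
that is additive in each `R`-factor. When `R` is finitely
generated as an abelian group and `Rˣ` is finite, this makes it a finitely generated abelian torsion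
group, hence finite.
-/

namespace Matrix

variable {n R : Type*} [Fintype n] [DecidableEq n] [Ring R]

theorem one_add_single_mul_one_add_single {i j : n} (hij : i ≠ j) (a b : R) :
    (1 + single i j a) * (1 + single i j b) = 1 + single i j (a + b) := by
  simp only [mul_add, add_mul, mul_one, one_mul, single_mul_single_of_ne _ _ _ _ hij.symm,
    single_add]
  abel

def elementaryHom {i j : n} (hij : i ≠ j) : Multiplicative R →* GL n R :=
  MonoidHom.toHomUnits
    { toFun := fun c => 1 + single i j c.toAdd
      map_one' := by simp
      map_mul' := fun a b => (one_add_single_mul_one_add_single hij a.toAdd b.toAdd).symm }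

@[simp]
theorem coe_elementaryHom {i j : n} (hij : i ≠ j) (c : Multiplicative R) :
    (elementaryHom hij c : Matrix n n R) = 1 + single i j c.toAdd := rfl

def diagonalUnits : (n → Rˣ) →* GL n R :=
  (Units.map (diagonalRingHom n R : (n → R) →* Matrix n n R)).comp
    MulEquiv.piUnits.symm.toMonoidHom

@[simp]
theorem coe_diagonalUnits (d : n → Rˣ) :
    (diagonalUnits d : Matrix n n R) = diagonal fun k => (d k : R) := rfl

theorem diagonal_mul_one_add_single_mul_diagonal (v w : n → R) (i j : n) (c : R) :
    diagonal v * (1 + single i j c) * diagonal w =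
      diagonal (v * w) + single i j (v i * c * w j) := by
  ext a b
  simp only [add_apply, mul_add, add_mul, diagonal_mul, mul_diagonal, single_apply,
    diagonal_apply, one_apply, Pi.mul_apply]
  split_ifs <;> simp_all

theorem diagonalUnits_mul_elementaryHom_mul_inv {i j : n} (hij : i ≠ j) (d : n → Rˣ) (c : R) :
    diagonalUnits d * elementaryHom hij (.ofAdd c) * (diagonalUnits d)⁻¹ =
      elementaryHom hij (.ofAdd (d i * c * ↑(d j)⁻¹)) := by
  rw [← map_inv diagonalUnits]
  ext : 1
  simp only [Units.val_mul, coe_elementaryHom, coe_diagonalUnits, toAdd_ofAdd,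
    diagonal_mul_one_add_single_mul_diagonal]
  simp [Pi.mul_def, ← diagonal_one]

theorem diagonalUnits_mulSingle_neg_one_conj_elementaryHom {i j : n} (hij : i ≠ j)
    (c : Multiplicative R) :
    diagonalUnits (Pi.mulSingle i (-1)) * elementaryHom hij c *
      (diagonalUnits (Pi.mulSingle i (-1)))⁻¹ = (elementaryHom hij c)⁻¹ := by
  rw [← ofAdd_toAdd c, diagonalUnits_mul_elementaryHom_mul_inv, ← map_inv, ← ofAdd_neg]
  simp [hij.symm]

end Matrix

namespace Abelianization

variable {G : Type*} [Group G]

theorem of_pow_two_eq_one {g x : G} (h : x * g * x⁻¹ = g⁻¹) : of g ^ 2 = 1 := by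
  rw [sq, mul_eq_one_iff_eq_inv, ← map_inv, ← h, map_mul, map_mul, map_inv, mul_inv_cancel_comm]

theorem closure_image_of_preimage_eq_top {s : Set G} {H : Subgroup G}
    (hs : Subgroup.closure s = H) : Subgroup.closure (of '' ((↑) ⁻¹' s : Set H)) = ⊤ := by
  subst hs
  rw [← MonoidHom.map_closure, Subgroup.closure_closure_coe_preimage, ← MonoidHom.range_eq_map,
    MonoidHom.range_eq_top]
  exact QuotientGroup.mk_surjective

end Abelianization

namespace GE2

open Matrix

variable {R : Type*} [Ring R]

def upper : Multiplicative R →* GE2 R :=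
  (elementaryHom (zero_ne_one : (0 : Fin 2) ≠ 1)).codRestrict _ fun c =>
    Subgroup.mem_sup_left (Subgroup.subset_closure ⟨c.toAdd, Or.inl rfl⟩)

def lower : Multiplicative R →* GE2 R :=
  (elementaryHom (one_ne_zero : (1 : Fin 2) ≠ 0)).codRestrict _ fun c =>
    Subgroup.mem_sup_left (Subgroup.subset_closure ⟨c.toAdd, Or.inr rfl⟩)

theorem coe_diagonalUnits_fin_two (d : Fin 2 → Rˣ) :
    (diagonalUnits d : Matrix (Fin 2) (Fin 2) R) = diagonal ![(d 0 : R), d 1] := by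
  rw [coe_diagonalUnits]
  congr 1
  ext k
  fin_cases k <;> rfl

def diag : (Fin 2 → Rˣ) →* GE2 R :=
  diagonalUnits.codRestrict _ fun d =>
    Subgroup.mem_sup_right (Subgroup.subset_closure ⟨d 0, d 1, coe_diagonalUnits_fin_two d⟩)

theorem of_upper_sq (c : Multiplicative R) : Abelianization.of (upper c) ^ 2 = 1 :=
  Abelianization.of_pow_two_eq_one (x := diag (Pi.mulSingle 0 (-1)))
    (Subtype.ext (diagonalUnits_mulSingle_neg_one_conj_elementaryHom _ c))

theorem of_lower_sq (c : Multiplicative R) : Abelianization.of (lower c) ^ 2 = 1 :=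
  Abelianization.of_pow_two_eq_one (x := diag (Pi.mulSingle 1 (-1)))
    (Subtype.ext (diagonalUnits_mulSingle_neg_one_conj_elementaryHom _ c))

theorem closure_generators :
    Subgroup.closure ({M : (Matrix (Fin 2) (Fin 2) R)ˣ | ∃ r : R,
      M.val = 1 + single 0 1 r ∨ M.val = 1 + single 1 0 r} ∪
      {M | ∃ α β : Rˣ, M.val = diagonal ![(α : R), (β : R)]}) = GE2 R := by
  rw [Subgroup.closure_union, GE2, E2, D2]

variable (R) in
def abelianizationCover :
    Multiplicative R × Multiplicative R × (Fin 2 → Rˣ) →* Abelianization (GE2 R) :=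
  (Abelianization.of.comp upper).coprod
    ((Abelianization.of.comp lower).coprod (Abelianization.of.comp diag))

theorem abelianizationCover_surjective : Function.Surjective (abelianizationCover R) := by
  rw [← MonoidHom.range_eq_top, eq_top_iff,
    ← Abelianization.closure_image_of_preimage_eq_top closure_generators,
    Subgroup.closure_le]
  rintro _ ⟨⟨M, hM⟩, (⟨r, hr | hr⟩ | ⟨α, β, hαβ⟩), rfl⟩
  · have hM : (⟨M, hM⟩ : GE2 R) = upper (.ofAdd r) := Subtype.ext (Units.ext hr)
    exact ⟨(.ofAdd r, 1, 1), by simp [abelianizationCover, hM]⟩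
  · have hM : (⟨M, hM⟩ : GE2 R) = lower (.ofAdd r) := Subtype.ext (Units.ext hr)
    exact ⟨(1, .ofAdd r, 1), by simp [abelianizationCover, hM]⟩
  · have hM : (⟨M, hM⟩ : GE2 R) = diag ![α, β] :=
      Subtype.ext (Units.ext (hαβ.trans (coe_diagonalUnits_fin_two ![α, β]).symm))
    exact ⟨(1, 1, ![α, β]), by simp [abelianizationCover, hM]⟩

theorem isMulTorsion_abelianization [Finite Rˣ] : IsMulTorsion (Abelianization (GE2 R)) := by
  intro x
  obtain ⟨⟨a, b, d⟩, rfl⟩ := abelianizationCover_surjective x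
  have ha := isOfFinOrder_iff_pow_eq_one.2 ⟨2, two_pos, of_upper_sq a⟩
  have hb := isOfFinOrder_iff_pow_eq_one.2 ⟨2, two_pos, of_lower_sq b⟩
  have hd := (Abelianization.of.comp diag).isOfFinOrder (isOfFinOrder_of_finite d)
  exact ha.mul (hb.mul hd)

theorem fg_abelianization [Module.Finite ℤ R] [Finite Rˣ] : Group.FG (Abelianization (GE2 R)) :=
  have : AddGroup.FG R := Module.Finite.iff_addGroup_fg.1 ‹_›
  Group.fg_of_surjective abelianizationCover_surjective

theorem finite_abelianization [Module.Finite ℤ R] [Finite Rˣ] :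
    Finite (Abelianization (GE2 R)) :=
  have := fg_abelianization (R := R)
  CommGroup.finite_of_fg_isMulTorsion _ isMulTorsion_abelianization

end GE2

theorem abelianization_GE2_finite_general
    (D : Type*) [DivisionRing D]
    (O : Subring D) (hfg : Module.Finite ℤ ↥O)
    (hU : Finite (↥O)ˣ) :
    Finite (Abelianization ↥(GE2 ↥O)) :=
  GE2.finite_abelianization

/-- Let `O` be an order in a finite-dimensional division `ℚ`-algebra with
`Oˣ` finite. Then the abelianization of `GE₂(O)` is finite. -/
theorem abelianization_GE2_finite
    (D : Type*) [DivisionRing D] [Algebra ℚ D] [FiniteDimensional ℚ D]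
    (O : Subring D) (hfg : Module.Finite ℤ ↥O) (hspan : Submodule.span ℚ (O : Set D) = ⊤)
    (hU : Finite (↥O)ˣ) :
    Finite (Abelianization ↥(GE2 ↥O)) :=
  abelianization_GE2_finite_general D O hfg hU
end

section
/- Let R be a nontrivial ring without zero divisors which is left Euclidean or right Euclidean, i.e. there exists a map δ : R \ {0} → ℕ such that for all a, b ∈ R with b ≠ 0 there exist q, r ∈ R with a = qb + r (respectively a = bq + r) and either r = 0 or δ(r) < δ(b). Then R is a GE₂-ring: GL₂(R) = GE₂(R), i.e. every invertible 2×2 matrix over R is a product of elementary matrices and invertible diagonal matrices. -/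
namespace GE2

variable {R : Type*} [Ring R]

def upperElementary (r : R) : (Matrix (Fin 2) (Fin 2) R)ˣ where
  val := !![1, r; 0, 1]
  inv := !![1, -r; 0, 1]
  val_inv := by simp [Matrix.one_fin_two]
  inv_val := by simp [Matrix.one_fin_two]

def lowerElementary (r : R) : (Matrix (Fin 2) (Fin 2) R)ˣ where
  val := !![1, 0; r, 1]
  inv := !![1, 0; -r, 1]
  val_inv := by simp [Matrix.one_fin_two]
  inv_val := by simp [Matrix.one_fin_two]

def diagonal (α β : Rˣ) : (Matrix (Fin 2) (Fin 2) R)ˣ where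
  val := !![(α : R), 0; 0, (β : R)]
  inv := !![((α⁻¹ : Rˣ) : R), 0; 0, ((β⁻¹ : Rˣ) : R)]
  val_inv := by simp [Matrix.one_fin_two]
  inv_val := by simp [Matrix.one_fin_two]

def swap : (Matrix (Fin 2) (Fin 2) R)ˣ where
  val := !![0, 1; -1, 0]
  inv := !![0, -1; 1, 0]
  val_inv := by simp [Matrix.one_fin_two]
  inv_val := by simp [Matrix.one_fin_two]

theorem upperElementary_mem (r : R) : upperElementary r ∈ GE2 R :=
  Subgroup.mem_sup_left <| Subgroup.subset_closure
    ⟨r, .inl <| by ext i j; fin_cases i <;> fin_cases j <;> simp [upperElementary]⟩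

theorem lowerElementary_mem (r : R) : lowerElementary r ∈ GE2 R :=
  Subgroup.mem_sup_left <| Subgroup.subset_closure
    ⟨r, .inr <| by ext i j; fin_cases i <;> fin_cases j <;> simp [lowerElementary]⟩

theorem diagonal_mem (α β : Rˣ) : diagonal α β ∈ GE2 R :=
  Subgroup.mem_sup_right <| Subgroup.subset_closure
    ⟨α, β, by ext i j; fin_cases i <;> fin_cases j <;> simp [diagonal]⟩

theorem swap_mem : (swap : (Matrix (Fin 2) (Fin 2) R)ˣ) ∈ GE2 R := by
  have hswap : swap = upperElementary (1 : R) * lowerElementary (-1) * upperElementary 1 := by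
    ext : 1
    simp [swap, upperElementary, lowerElementary]
  rw [hswap]
  exact mul_mem (mul_mem (upperElementary_mem 1) (lowerElementary_mem (-1)))
    (upperElementary_mem 1)

theorem mem_of_upper_triangular [IsDedekindFiniteMonoid R] (A : (Matrix (Fin 2) (Fin 2) R)ˣ)
    (hA : A.val 1 0 = 0) : A ∈ GE2 R := by
  have hPA := congr_fun₂ A.inv_mul 0 0
  have hAP := congr_fun₂ A.mul_inv 1 1
  simp only [Matrix.mul_apply, Fin.sum_univ_two, hA] at hPA hAP
  obtain ⟨α, hα⟩ := IsUnit.of_mul_eq_one_right _ (by simpa using hPA)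
  obtain ⟨β, hβ⟩ := IsUnit.of_mul_eq_one _ (by simpa using hAP)
  have hfactor : A = diagonal α β * upperElementary (α⁻¹ * A.val 0 1) := by
    ext i j
    fin_cases i <;> fin_cases j <;> simp [diagonal, upperElementary, ← hα, ← hβ, hA]
  rw [hfactor]
  exact mul_mem (diagonal_mem α β) (upperElementary_mem _)

theorem mem_of_lower_triangular [IsDedekindFiniteMonoid R] (A : (Matrix (Fin 2) (Fin 2) R)ˣ)
    (hA : A.val 0 1 = 0) : A ∈ GE2 R := by
  have hconj : swap * A * swap⁻¹ ∈ GE2 R :=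
    mem_of_upper_triangular _ <| by
      simp [swap, Matrix.mul_apply, Fin.sum_univ_two, Matrix.vecMul, dotProduct, hA]
  rwa [Subgroup.mul_mem_cancel_right _ (inv_mem swap_mem),
    Subgroup.mul_mem_cancel_left _ swap_mem] at hconj

theorem mem_of_left_euclidean [IsDedekindFiniteMonoid R] (δ : R → ℕ)
    (hδ : ∀ a b : R, b ≠ 0 → ∃ q r : R, a = q * b + r ∧ (r = 0 ∨ δ r < δ b))
    (A : (Matrix (Fin 2) (Fin 2) R)ˣ) : A ∈ GE2 R := by
  induction hn : δ (A.val 1 0) using Nat.strong_induction_on generalizing A with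
  | _ n ih =>
  by_cases hc : A.val 1 0 = 0
  · exact mem_of_upper_triangular A hc
  obtain ⟨q, r, hqr, hr⟩ := hδ (A.val 0 0) (A.val 1 0) hc
  -- subtracting `q` times row 1 from row 0 and then swapping the rows puts `r` at `(1, 0)`
  have hE : swap⁻¹ * upperElementary (-q) ∈ GE2 R :=
    mul_mem (inv_mem swap_mem) (upperElementary_mem _)
  have hB : (swap⁻¹ * upperElementary (-q) * A).val 1 0 = r := by
    simp [swap, upperElementary, Matrix.mul_apply, Fin.sum_univ_two, hqr]
  rw [← Subgroup.mul_mem_cancel_left _ hE]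
  rcases hr with rfl | hr
  · exact mem_of_upper_triangular _ hB
  · exact ih _ (hn ▸ hB ▸ hr) _ rfl

theorem mem_of_right_euclidean [IsDedekindFiniteMonoid R] (δ : R → ℕ)
    (hδ : ∀ a b : R, b ≠ 0 → ∃ q r : R, a = b * q + r ∧ (r = 0 ∨ δ r < δ b))
    (A : (Matrix (Fin 2) (Fin 2) R)ˣ) : A ∈ GE2 R := by
  induction hn : δ (A.val 0 1) using Nat.strong_induction_on generalizing A with
  | _ n ih =>
  by_cases hb : A.val 0 1 = 0
  · exact mem_of_lower_triangular A hb
  obtain ⟨q, r, hqr, hr⟩ := hδ (A.val 0 0) (A.val 0 1) hb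
  have hE : lowerElementary (-q) * swap ∈ GE2 R :=
    mul_mem (lowerElementary_mem _) swap_mem
  have hB : (A * (lowerElementary (-q) * swap)).val 0 1 = r := by
    simp [swap, lowerElementary, Matrix.mul_apply, Fin.sum_univ_two, hqr]
  rw [← Subgroup.mul_mem_cancel_right _ hE]
  rcases hr with rfl | hr
  · exact mem_of_lower_triangular _ hB
  · exact ih _ (hn ▸ hB ▸ hr) _ rfl

end GE2

theorem euclidean_is_GE2_ring_general (R : Type*) [Ring R] [NoZeroDivisors R]
    (h : (∃ δ : R → ℕ, ∀ a b : R, b ≠ 0 →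
            ∃ q r : R, a = q * b + r ∧ (r = 0 ∨ δ r < δ b)) ∨
         (∃ δ : R → ℕ, ∀ a b : R, b ≠ 0 →
            ∃ q r : R, a = b * q + r ∧ (r = 0 ∨ δ r < δ b))) :
    GE2 R = ⊤ := by
  rw [Subgroup.eq_top_iff']
  rcases h with ⟨δ, hδ⟩ | ⟨δ, hδ⟩
  · exact GE2.mem_of_left_euclidean δ hδ
  · exact GE2.mem_of_right_euclidean δ hδ

/-- A nontrivial ring without zero divisors that is left Euclidean or
right Euclidean is a `GE₂`-ring: every invertible `2×2` matrix is a product of elementary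
and invertible diagonal matrices, i.e. `GE₂(R) = GL₂(R)`. -/
theorem euclidean_is_GE2_ring (R : Type*) [Ring R] [Nontrivial R] [NoZeroDivisors R]
    (h : (∃ δ : R → ℕ, ∀ a b : R, b ≠ 0 →
            ∃ q r : R, a = q * b + r ∧ (r = 0 ∨ δ r < δ b)) ∨
         (∃ δ : R → ℕ, ∀ a b : R, b ≠ 0 →
            ∃ q r : R, a = b * q + r ∧ (r = 0 ∨ δ r < δ b))) :
    GE2 R = ⊤ :=
  euclidean_is_GE2_ring_general R h
end

section
/- Let G be a finite group. If the abelianization of the unit group of the integral group ring ℤG is finite, then G is a cut group, i.e. the unit group of the center of ℤG is finite. -/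
/-!
Let `K` be an algebraic closure of `ℚ`. By Maschke and Wedderburn–Artin, `K[G]` is a product of
matrix algebras `M_{dᵢ}(K)`. A central unit of `ℤG` that dies in the abelianization of `(ℤG)ˣ` is
a product of commutators, so in each factor it becomes a scalar `cᵢ` with `cᵢ ^ dᵢ = det = 1`;
as `ℤG ⊆ K[G]`, there are only finitely many such units. Hence `Z(ℤG)ˣ → (ℤG)ˣᵃᵇ` has finite
kernel, and its image is finite by hypothesis.
-/

open MonoidAlgebra

theorem Matrix.finite_setOf_mem_center_det_eq_one (n K : Type*) [Fintype n] [DecidableEq n]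
    [CommRing K] [IsDomain K] :
    {M : Matrix n n K | M ∈ Set.center (Matrix n n K) ∧ M.det = 1}.Finite := by
  classical
  cases isEmpty_or_nonempty n
  · exact Set.toFinite _
  refine ((Polynomial.nthRoots (Fintype.card n) (1 : K)).toFinset.finite_toSet.image
    (scalar n)).subset ?_
  rintro M ⟨hM, hdet⟩
  rw [center_eq_scalar_image, Set.center_eq_univ] at hM
  obtain ⟨c, -, rfl⟩ := hM
  refine ⟨c, ?_, rfl⟩
  rw [Finset.mem_coe, Multiset.mem_toFinset, Polynomial.mem_nthRoots Fintype.card_pos]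
  simpa using hdet

theorem IsSemisimpleRing.finite_setOf_units_mem_center_commutator (K B : Type*) [Field K]
    [IsAlgClosed K] [Ring B] [Algebra K B] [IsSemisimpleRing B] [FiniteDimensional K B] :
    {u : Bˣ | (u : B) ∈ Set.center B ∧ u ∈ commutator Bˣ}.Finite := by
  obtain ⟨n, d, -, ⟨e⟩⟩ := IsSemisimpleRing.exists_algEquiv_pi_matrix_of_isAlgClosed K B
  let component (i : Fin n) : B →* Matrix (Fin (d i)) (Fin (d i)) K :=
    (Pi.evalMonoidHom _ i).comp e.toMonoidHom
  have mem_center {b : B} (hb : b ∈ Set.center B) (i : Fin n) :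
      component i b ∈ Set.center (Matrix (Fin (d i)) (Fin (d i)) K) := by
    have := MulEquivClass.apply_mem_center e hb
    rw [Set.center_pi] at this
    exact this i (Set.mem_univ i)
  have det_eq_one {u : Bˣ} (hu : u ∈ commutator Bˣ) (i : Fin n) :
      (component i u).det = 1 := by
    have := Abelianization.commutator_subset_ker
      (Units.map ((Matrix.detMonoidHom).comp (component i))) hu
    simpa [Units.ext_iff] using this
  refine Set.Finite.of_finite_image (f := fun u : Bˣ => e u) ?_ ?_
  · refine (Set.Finite.pi fun i => Matrix.finite_setOf_mem_center_det_eq_one _ K).subset ?_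
    rintro _ ⟨u, ⟨hc, hu⟩, rfl⟩ i -
    exact ⟨mem_center hc i, det_eq_one hu i⟩
  · intro u _ v _ huv
    exact Units.ext (e.injective huv)

theorem MonoidAlgebra.mapRingHom_mem_center {R S M : Type*} [CommSemiring R] [CommSemiring S]
    [Monoid M] (f : R →+* S) {a : MonoidAlgebra R M} (ha : a ∈ Set.center (MonoidAlgebra R M)) :
    mapRingHom M f a ∈ Set.center (MonoidAlgebra S M) := by
  rw [Semigroup.mem_center_iff]
  intro b
  induction b using MonoidAlgebra.induction_on with
  | of m =>
    have hm : of S M m = mapRingHom M f (of R M m) := by simp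
    rw [hm, ← map_mul, ← map_mul, Semigroup.mem_center_iff.mp ha]
  | add x y hx hy => rw [add_mul, mul_add, hx, hy]
  | smul r x hx => rw [smul_mul_assoc, hx, mul_smul_comm]

theorem finite_units_center_of_finite_abelianization {A B : Type*} [Ring A] [Ring B]
    (φ : A →+* B) (hφ : Function.Injective φ)
    (hcenter : ∀ a ∈ Set.center A, φ a ∈ Set.center B)
    (hB : {u : Bˣ | (u : B) ∈ Set.center B ∧ u ∈ commutator Bˣ}.Finite)
    (hA : Finite (Abelianization Aˣ)) :
    Finite (Subring.center A)ˣ := by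
  let ι : (Subring.center A)ˣ →* Aˣ := Units.map (Subring.center A).subtype.toMonoidHom
  let f : (Subring.center A)ˣ →* Abelianization Aˣ := Abelianization.of.comp ι
  rw [f.finite_iff_finite_ker_range]
  refine ⟨?_, inferInstance⟩
  have hι : Function.Injective (Units.map φ.toMonoidHom ∘ ι) := by
    intro u v huv
    exact Units.ext (Subtype.ext (hφ (congrArg Units.val huv)))
  refine Set.Finite.of_finite_image (f := Units.map φ.toMonoidHom ∘ ι) ?_ hι.injOn |>.to_subtype
  refine hB.subset ?_
  rintro _ ⟨u, hu, rfl⟩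
  refine ⟨hcenter _ (u : Subring.center A).2, ?_⟩
  have hcomm : ι u ∈ commutator Aˣ := Abelianization.ker_of (G := Aˣ) ▸ hu
  have := Subgroup.mem_map_of_mem (Units.map φ.toMonoidHom) hcomm
  rw [map_commutator_eq] at this
  exact Subgroup.commutator_mono le_top le_top this

/-- Let `G` be a finite group. If the abelianization of `(ℤG)ˣ` is
finite, then `G` is a cut group: the unit group of the center of `ℤG` is finite. -/
theorem cut_of_finite_abelianization_units (G : Type*) [Group G] [Finite G]
    (h : Finite (Abelianization (MonoidAlgebra ℤ G)ˣ)) :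
    Finite (↥(Subring.center (MonoidAlgebra ℤ G)))ˣ := by
  let K := AlgebraicClosure ℚ
  have : NeZero (Nat.card G : K) := ⟨Nat.cast_ne_zero.mpr Nat.card_pos.ne'⟩
  exact finite_units_center_of_finite_abelianization (mapRingHom G (Int.castRingHom K))
    (map_injective _ Int.cast_injective) (fun _ ↦ mapRingHom_mem_center _)
    (IsSemisimpleRing.finite_setOf_units_mem_center_commutator K (MonoidAlgebra K G)) h
end

section
/- There is no finite-dimensional division ℚ-algebra D whose unit group Dˣ contains a subgroup isomorphic to C₃ × Q₈, the direct product of the cyclic group of order 3 with the quaternion group of order 8. Equivalently, there is no injective group homomorphism from C₃ × Q₈ into the unit group of a finite-dimensional division ℚ-algebra. -/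
/-- In any ring, if `I² = J² = -1` and `JI = -IJ`, then `(I+J+IJ)² = -3`. -/
lemma quat_sum_sq {R : Type*} [Ring R] (I J : R)
    (hI : I * I = -1) (hJ : J * J = -1) (hJI : J * I = -(I * J)) :
    (I + J + I * J) * (I + J + I * J) = -3 := by
  have hII : ∀ x : R, I * (I * x) = -x := fun x => by
    rw [← mul_assoc, hI, neg_one_mul]
  have hJJ : ∀ x : R, J * (J * x) = -x := fun x => by
    rw [← mul_assoc, hJ, neg_one_mul]
  have hJI' : ∀ x : R, J * (I * x) = -(I * (J * x)) := fun x => by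
    rw [← mul_assoc, hJI, neg_mul, mul_assoc]
  simp only [add_mul, mul_add, mul_assoc, hI, hJ, hJI, hII, hJJ, hJI',
    mul_neg, neg_neg, mul_one, neg_mul]
  abel_nf
  norm_num

/-- There is no injective group homomorphism from `C₃ × Q₈` into the
unit group of a finite-dimensional division `ℚ`-algebra. -/
theorem no_embedding_C3_times_Q8_in_division_algebra
    (D : Type*) [DivisionRing D] [Algebra ℚ D] [FiniteDimensional ℚ D]
    (f : (Multiplicative (ZMod 3) × QuaternionGroup 2) →* Dˣ) :
    ¬ Function.Injective f := by
  intro hf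
  haveI : CharZero D := charZero_of_injective_algebraMap (algebraMap ℚ D).injective
  set G := Multiplicative (ZMod 3) × QuaternionGroup 2
  set Z : D := (f (Multiplicative.ofAdd (1 : ZMod 3), 1) : D) with hZdef
  set I : D := (f (1, QuaternionGroup.a 1) : D) with hIdef
  set J : D := (f (1, QuaternionGroup.xa 0) : D) with hJdef
  set M : D := (f (1, QuaternionGroup.a 2) : D) with hMdef
  have hmul : ∀ g h : G, (f (g * h) : D) = (f g : D) * (f h : D) := fun g h => by
    rw [map_mul, Units.val_mul]
  have hne : ∀ g : G, g ≠ 1 → (f g : D) ≠ 1 := by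
    intro g hg h
    exact hg (hf (show f g = f 1 by
      rw [map_one]; exact Units.ext (by rw [h, Units.val_one])))
  -- relations coming from the group structure
  have hI2 : I * I = M := by
    rw [hIdef, hMdef, ← hmul,
      show ((1, QuaternionGroup.a 1) * (1, QuaternionGroup.a 1) : G)
        = (1, QuaternionGroup.a 2) from by decide]
  have hJ2 : J * J = M := by
    rw [hJdef, hMdef, ← hmul,
      show ((1, QuaternionGroup.xa 0) * (1, QuaternionGroup.xa 0) : G)
        = (1, QuaternionGroup.a 2) from by decide]
  have hM2 : M * M = 1 := by
    rw [hMdef, ← hmul,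
      show ((1, QuaternionGroup.a 2) * (1, QuaternionGroup.a 2) : G) = 1 from by decide,
      map_one, Units.val_one]
  have hIJ : I * J = M * (J * I) := by
    rw [hIdef, hJdef, hMdef, ← hmul, ← hmul, ← hmul,
      show ((1, QuaternionGroup.a 1) * (1, QuaternionGroup.xa 0) : G)
        = (1, QuaternionGroup.a 2) * ((1, QuaternionGroup.xa 0) * (1, QuaternionGroup.a 1))
        from by decide]
  have hZI : Z * I = I * Z := by
    rw [hZdef, hIdef, ← hmul, ← hmul,
      show ((Multiplicative.ofAdd (1 : ZMod 3), 1) * (1, QuaternionGroup.a 1) : G)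
        = (1, QuaternionGroup.a 1) * (Multiplicative.ofAdd (1 : ZMod 3), 1) from by decide]
  have hZJ : Z * J = J * Z := by
    rw [hZdef, hJdef, ← hmul, ← hmul,
      show ((Multiplicative.ofAdd (1 : ZMod 3), 1) * (1, QuaternionGroup.xa 0) : G)
        = (1, QuaternionGroup.xa 0) * (Multiplicative.ofAdd (1 : ZMod 3), 1) from by decide]
  have hZ3 : Z * Z * Z = 1 := by
    rw [hZdef, ← hmul, ← hmul,
      show ((Multiplicative.ofAdd (1 : ZMod 3), 1) * (Multiplicative.ofAdd (1 : ZMod 3), 1)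
        * (Multiplicative.ofAdd (1 : ZMod 3), 1) : G) = 1 from by decide,
      map_one, Units.val_one]
  have hZ1 : Z ≠ 1 := hne _ (by decide)
  have hM1 : M ≠ 1 := hne _ (by decide)
  have hI1 : I ≠ 1 := hne _ (by decide)
  have hJ0 : J ≠ 0 := Units.ne_zero _
  -- `M = -1`
  have hMneg : M = -1 := by
    have h0 : (M - 1) * (M + 1) = 0 := by
      have he : (M - 1) * (M + 1) = M * M - 1 := by noncomm_ring
      rw [he, hM2, sub_self]
    rcases mul_eq_zero.1 h0 with h | h
    · exact absurd (by rwa [sub_eq_zero] at h) hM1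
    · exact eq_neg_of_add_eq_zero_left h
  have hI2' : I * I = -1 := hMneg ▸ hI2
  have hJ2' : J * J = -1 := hMneg ▸ hJ2
  have hJI' : J * I = -(I * J) := by
    rw [hMneg, neg_one_mul] at hIJ
    rw [hIJ, neg_neg]
  -- `Z² + Z + 1 = 0`
  have hZq : Z * Z + Z + 1 = 0 := by
    have h0 : (Z - 1) * (Z * Z + Z + 1) = 0 := by
      have he : (Z - 1) * (Z * Z + Z + 1) = Z * Z * Z - 1 := by noncomm_ring
      rw [he, hZ3, sub_self]
    rcases mul_eq_zero.1 h0 with h | h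
    · exact absurd (by rwa [sub_eq_zero] at h) hZ1
    · exact h
  -- the key factorization
  set B : D := I + J + I * J with hBdef
  have cZI : Commute Z I := hZI
  have cZJ : Commute Z J := hZJ
  have cZB : Commute Z B := ((cZI.add_right cZJ).add_right (cZI.mul_right cZJ) :
    Commute Z (I + J + I * J))
  have cAB : Commute (2 * Z + 1) B :=
    ((Commute.ofNat_left 2 B).mul_left cZB).add_left (Commute.one_left B)
  have cAI : Commute (2 * Z + 1) I :=
    ((Commute.ofNat_left 2 I).mul_left cZI).add_left (Commute.one_left I)
  have hB2 : B * B = -3 := quat_sum_sq I J hI2' hJ2' hJI'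
  have hkey : ((2 * Z + 1) - B) * ((2 * Z + 1) + B) = 0 := by
    have he : ((2 * Z + 1) - B) * ((2 * Z + 1) + B) =
        ((2 * Z + 1) * (2 * Z + 1) - B * B) + ((2 * Z + 1) * B - B * (2 * Z + 1)) := by
      noncomm_ring
    rw [he, cAB.eq, sub_self, add_zero, hB2, sub_neg_eq_add]
    have h2 : (2 * Z + 1) * (2 * Z + 1) + 3 = 4 * (Z * Z + Z + 1) := by
      noncomm_ring
      norm_num
    rw [h2, hZq, mul_zero]
  -- in either case, `B` commutes with `I`
  have hBI : B * I = I * B := by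
    rcases mul_eq_zero.1 hkey with h | h
    · have hB : B = 2 * Z + 1 := (sub_eq_zero.1 h).symm
      rw [hB]; exact cAI.eq
    · have hB : B = -(2 * Z + 1) := eq_neg_of_add_eq_zero_right h
      rw [hB]; exact cAI.neg_left.eq
  -- expand to get `I * J = J`, hence `I = 1`
  have hIIJ : I * (I * J) = -J := by rw [← mul_assoc, hI2', neg_one_mul]
  have hIJI : (I * J) * I = J := by
    rw [mul_assoc, hJI', mul_neg, ← mul_assoc, hI2', neg_one_mul, neg_neg]
  have hexp : (2 : D) * (I * J) = 2 * J := by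
    have h1 : B * I = I * I + -(I * J) + J := by
      rw [hBdef, add_mul, add_mul, hJI', hIJI]
    have h2 : I * B = I * I + I * J + -J := by
      rw [hBdef, mul_add, mul_add, hIIJ]
    rw [h1, h2] at hBI
    have h3 : (2 : D) * (I * J) - 2 * J = (I * I + I * J + -J) - (I * I + -(I * J) + J) := by
      noncomm_ring
    rw [← hBI, sub_self] at h3
    exact sub_eq_zero.1 h3
  have hIJeqJ : I * J = J := mul_left_cancel₀ two_ne_zero hexp
  exact hI1 (mul_right_cancel₀ hJ0 (by rw [hIJeqJ, one_mul] : I * J = 1 * J))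
end

section
/- Let D be a finite-dimensional division ℚ-algebra and G a finite subgroup of the unit group Dˣ. If G is isomorphic to Q₈ (the quaternion group of order 8) or to SL(2,3) (the 2×2 matrices of determinant 1 over the field with 3 elements), then the ℚ-subalgebra of D generated by G is isomorphic as a ℚ-algebra to ℍ[ℚ,−1,−1]; if G is isomorphic to the dicyclic group of order 12 (C₃ ⋊ C₄ with the C₄-action by inversion), then the ℚ-subalgebra of D generated by G is isomorphic as a ℚ-algebra to ℍ[ℚ,−1,−3]. -/
/-!
The central involution of `Q₈`, `SL(2,3)` or `Dic₁₂` maps to `-1` in `D`, the only square root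
of `1` other than `1` in a domain. So two suitable group elements give `i, j ∈ D` with
`i² = j² = -1` and `ji = -ij`; for `Dic₁₂` one takes instead `j = 2ω + 1` with `ω` of order `3`,
so that `j² = -3`. This basis defines a homomorphism `ℍ[ℚ,a,b] → D`, injective because for
`a, b < 0` the norm form `x₀² - a x₁² - b x₂² + ab x₃²` is anisotropic. Its image contains `G`
as soon as it contains a generating set. For `SL(2,3)` the remaining generator `w` of order `3`
permutes `i, j, k` cyclically under conjugation, so `2w + 1` commutes with `i + j + k` and both
square to `-3`; hence `2w + 1 = ±(i + j + k)`.
-/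
open Quaternion Pointwise

namespace QuaternionAlgebra

theorem eq_zero_of_re_mul_star_eq_zero {K : Type*} [Field K] [LinearOrder K]
    [IsStrictOrderedRing K] {c₁ c₂ : K} (hc₁ : c₁ < 0) (hc₂ : c₂ < 0) {a : ℍ[K,c₁,c₂]}
    (h : (a * star a).re = 0) : a = 0 := by
  have hnorm : a.re ^ 2 + (-c₁) * a.imI ^ 2 + (-c₂) * a.imJ ^ 2 + (c₁ * c₂) * a.imK ^ 2 = 0 := by
    simp only [re_mul, re_star, imI_star, imJ_star, imK_star] at h
    linear_combination h
  have hI : 0 ≤ (-c₁) * a.imI ^ 2 := mul_nonneg (neg_nonneg.2 hc₁.le) (sq_nonneg _)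
  have hJ : 0 ≤ (-c₂) * a.imJ ^ 2 := mul_nonneg (neg_nonneg.2 hc₂.le) (sq_nonneg _)
  have hK : 0 ≤ (c₁ * c₂) * a.imK ^ 2 :=
    mul_nonneg (mul_nonneg_of_nonpos_of_nonpos hc₁.le hc₂.le) (sq_nonneg _)
  have hre : a.re ^ 2 = 0 := by linarith [sq_nonneg a.re]
  have himI : (-c₁) * a.imI ^ 2 = 0 := by linarith [sq_nonneg a.re]
  have himJ : (-c₂) * a.imJ ^ 2 = 0 := by linarith [sq_nonneg a.re]
  have himK : (c₁ * c₂) * a.imK ^ 2 = 0 := by linarith [sq_nonneg a.re]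
  ext <;> simp_all [hc₁.ne, hc₂.ne]

namespace Basis

section CommRing

variable {R A : Type*} [CommRing R] [Ring A] [Algebra R A] {c₁ c₂ : R}

def ofAnticomm (i j : A) (hi : i * i = c₁ • 1) (hj : j * j = c₂ • 1) (hji : j * i = -(i * j)) :
    Basis A c₁ 0 c₂ where
  i := i
  j := j
  k := i * j
  i_mul_i := by rw [hi, zero_smul, add_zero]
  j_mul_j := hj
  i_mul_j := rfl
  j_mul_i := by rw [hji, zero_smul, zero_sub]

theorem i_mem_range_liftHom {c₃ : R} (B : Basis A c₁ c₂ c₃) : B.i ∈ B.liftHom.range := by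
  rw [range_liftHom]; exact Algebra.subset_adjoin (by simp)

theorem j_mem_range_liftHom {c₃ : R} (B : Basis A c₁ c₂ c₃) : B.j ∈ B.liftHom.range := by
  rw [range_liftHom]; exact Algebra.subset_adjoin (by simp)

theorem k_mem_range_liftHom {c₃ : R} (B : Basis A c₁ c₂ c₃) : B.k ∈ B.liftHom.range := by
  rw [range_liftHom]; exact Algebra.subset_adjoin (by simp)

end CommRing

variable {K D : Type*} [Field K] [LinearOrder K] [IsStrictOrderedRing K] [Ring D] [Algebra K D]
  {c₁ c₂ : K}

theorem injective_liftHom [Nontrivial D] (hc₁ : c₁ < 0) (hc₂ : c₂ < 0) (B : Basis D c₁ 0 c₂) :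
    Function.Injective B.liftHom := by
  refine (injective_iff_map_eq_zero _).2 fun a ha => eq_zero_of_re_mul_star_eq_zero hc₁ hc₂ ?_
  apply (algebraMap K D).injective
  rw [map_zero, ← B.liftHom.commutes, coe_algebraMap, ← mul_star_eq_coe, map_mul, ha, zero_mul]

theorem nonempty_adjoin_algEquiv [Nontrivial D] (hc₁ : c₁ < 0) (hc₂ : c₂ < 0)
    (B : Basis D c₁ 0 c₂) {S : Set D} (hS : S ⊆ B.liftHom.range)
    (hi : B.i ∈ Algebra.adjoin K S) (hj : B.j ∈ Algebra.adjoin K S) :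
    Nonempty (Algebra.adjoin K S ≃ₐ[K] ℍ[K,c₁,c₂]) := by
  have hrange : Algebra.adjoin K S = B.liftHom.range := by
    refine le_antisymm (Algebra.adjoin_le hS) ?_
    rw [range_liftHom, Algebra.adjoin_le_iff]
    rintro x (rfl | rfl | rfl)
    exacts [hi, hj, B.i_mul_j ▸ mul_mem hi hj]
  exact ⟨(Subalgebra.equivOfEq _ _ hrange).trans
    (AlgEquiv.ofInjective _ (B.injective_liftHom hc₁ hc₂)).symm⟩

end Basis

end QuaternionAlgebra

theorem MonoidHom.range_subset_of_closure_eq_top {M A : Type*} [Monoid M] [Monoid A]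
    (f : M →* A) {s : Set M} (hs : Submonoid.closure s = ⊤) {T : Submonoid A}
    (hsT : s ⊆ f ⁻¹' T) : Set.range f ⊆ T := by
  rintro _ ⟨x, rfl⟩
  exact Submonoid.closure_le (S := T.comap f) |>.2 hsT (hs ▸ Submonoid.mem_top x)

theorem Subgroup.exists_injective_range_eq_image_coe {M Γ : Type*} [Monoid M] [Group Γ]
    (G : Subgroup Mˣ) (e : G ≃* Γ) :
    ∃ f : Γ →* M, Function.Injective f ∧ Set.range f = (fun u : Mˣ => (u : M)) '' G := by
  refine ⟨(Units.coeHom M).comp (G.subtype.comp e.symm.toMonoidHom),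
    fun x y h => e.symm.injective (Subtype.ext (Units.ext h)), ?_⟩
  change Set.range ((fun u : Mˣ => (u : M)) ∘ G.subtype ∘ e.symm) = _
  rw [Set.range_comp, Set.range_comp, EquivLike.range_eq_univ, Set.image_univ, G.coe_subtype,
    Subtype.range_coe]

/-- A certificate, checkable by `decide`, that `s` generates the finite monoid `M`. -/
theorem Submonoid.closure_eq_top_of_iterate_eq_univ {M : Type*} [Monoid M] [Fintype M]
    [DecidableEq M] (s : Finset M) (n : ℕ) (h : (fun t => t ∪ t * s)^[n] {1} = Finset.univ) :
    Submonoid.closure (s : Set M) = ⊤ := by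
  have key : ∀ m, ((fun t => t ∪ t * s)^[m] {1} : Set M) ⊆ Submonoid.closure (s : Set M) := by
    intro m
    induction m with
    | zero => simp
    | succ m ih =>
      rw [Function.iterate_succ_apply', Finset.coe_union, Finset.coe_mul]
      exact Set.union_subset ih
        (Set.mul_subset_iff.2 fun x hx y hy => mul_mem (ih hx) (Submonoid.subset_closure hy))
  exact eq_top_iff.2 fun x _ => key n (h ▸ Finset.mem_univ x)

theorem QuaternionGroup.closure_a_one_xa_zero (n : ℕ) [NeZero n] :
    Submonoid.closure {a 1, xa 0} = (⊤ : Submonoid (QuaternionGroup n)) := by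
  refine eq_top_iff.2 fun x _ => ?_
  have ha : ∀ i : ZMod (2 * n), a i ∈ Submonoid.closure {a 1, xa 0} := fun i => by
    rw [← ZMod.natCast_zmod_val i, ← a_one_pow]
    exact pow_mem (Submonoid.subset_closure (by simp)) _
  rcases x with i | i
  · exact ha i
  · rw [← zero_add i, ← xa_mul_a]
    exact mul_mem (Submonoid.subset_closure (by simp)) (ha i)

section Domain

variable {D : Type*} [Ring D] [NoZeroDivisors D]

theorem MonoidHom.map_eq_neg_one_of_injective {M : Type*} [Monoid M] {f : M →* D}
    (hf : Function.Injective f) {z : M} (hz : z * z = 1) (hz1 : z ≠ 1) : f z = -1 :=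
  (mul_self_eq_one_iff.1 (by rw [← map_mul, hz, map_one])).resolve_left
    ((map_ne_one_iff f hf).2 hz1)

theorem sq_add_self_add_one_eq_zero {w : D} (h : w ^ 3 = 1) (hw : w ≠ 1) : w ^ 2 + w + 1 = 0 := by
  have : (w - 1) * (w ^ 2 + w + 1) = 0 := by rw [← sub_eq_zero.2 h]; noncomm_ring
  exact (mul_eq_zero.1 this).resolve_left (sub_ne_zero.2 hw)

end Domain

theorem two_mul_add_one_sq {D : Type*} [Ring D] {w : D} (h : w ^ 2 + w + 1 = 0) :
    (2 * w + 1) ^ 2 = -3 :=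
  calc (2 * w + 1) ^ 2 = 4 * (w ^ 2 + w + 1) - 3 := by noncomm_ring; norm_num
    _ = -3 := by rw [h, mul_zero, zero_sub]

theorem Subalgebra.mem_of_two_mul_add_one_mem {K D : Type*} [Field K] [CharZero K] [Ring D]
    [Algebra K D] {S : Subalgebra K D} {w : D} (h : 2 * w + 1 ∈ S) : w ∈ S := by
  have : w = (2 : K)⁻¹ • (2 * w + 1 - 1) := by
    rw [add_sub_cancel_right, two_mul, ← two_smul K, inv_smul_smul₀ two_ne_zero]
  exact this ▸ S.smul_mem (sub_mem h (one_mem S)) _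

namespace QuaternionAlgebra.Basis

variable {K D : Type*} [Field K] [CharZero K] [Ring D] [NoZeroDivisors D] [Algebra K D]

theorem mem_range_liftHom_of_pow_three_eq_one (B : Basis D (-1 : K) 0 (-1)) {w : D}
    (hw3 : w ^ 3 = 1) (hw1 : w ≠ 1) (hwi : w * B.i = B.j * w) (hwj : w * B.j = B.k * w) :
    w ∈ B.liftHom.range := by
  have hwk : w * B.k = B.i * w := by
    rw [← B.i_mul_j, ← mul_assoc, hwi, mul_assoc, hwj, ← mul_assoc, j_mul_k]
    simp
  set m := B.i + B.j + B.k
  have hmw : Commute m w := by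
    simp only [Commute, SemiconjBy, m, add_mul, mul_add, hwi, hwj, hwk]
    abel
  have hm : m ^ 2 = -3 := by
    simp only [m, sq, add_mul, mul_add, i_mul_i, j_mul_j, k_mul_k, i_mul_j, j_mul_i, i_mul_k,
      k_mul_i, j_mul_k, k_mul_j]
    simp only [neg_smul, one_smul, zero_smul, zero_mul, neg_neg, neg_mul_neg, mul_one]
    noncomm_ring
    norm_num
  have hmem : m ∈ B.liftHom.range :=
    add_mem (add_mem B.i_mem_range_liftHom B.j_mem_range_liftHom) B.k_mem_range_liftHom
  have hsq : (2 * w + 1) ^ 2 = m ^ 2 := by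
    rw [two_mul_add_one_sq (sq_add_self_add_one_eq_zero hw3 hw1), hm]
  refine Subalgebra.mem_of_two_mul_add_one_mem ?_
  rcases (((Commute.ofNat_right m 2).mul_right hmw).add_right (Commute.one_right m)).symm
    |>.sq_eq_sq_iff_eq_or_eq_neg.1 hsq with h | h
  · exact h ▸ hmem
  · exact h ▸ neg_mem hmem

end QuaternionAlgebra.Basis

namespace SpecialLinearGroupZMod3

open Matrix

def i : SpecialLinearGroup (Fin 2) (ZMod 3) := ⟨!![0, -1; 1, 0], by decide⟩
def j : SpecialLinearGroup (Fin 2) (ZMod 3) := ⟨!![1, 1; 1, -1], by decide⟩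
def w : SpecialLinearGroup (Fin 2) (ZMod 3) := ⟨!![1, 1; 0, 1], by decide⟩

set_option maxRecDepth 10000 in
theorem closure_i_j_w : Submonoid.closure {i, j, w} = ⊤ := by
  simpa using Submonoid.closure_eq_top_of_iterate_eq_univ {i, j, w} 4 (by decide)

end SpecialLinearGroupZMod3

section Cases

open QuaternionAlgebra

variable {K D : Type*} [Field K] [LinearOrder K] [IsStrictOrderedRing K] [Ring D] [IsDomain D]
  [Algebra K D]

open QuaternionGroup in
theorem nonempty_adjoin_range_algEquiv_of_quaternionGroup_two (f : QuaternionGroup 2 →* D)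
    (hf : Function.Injective f) :
    Nonempty (Algebra.adjoin K (Set.range f) ≃ₐ[K] ℍ[K,-1,-1]) := by
  have hz : f (a 2) = -1 := f.map_eq_neg_one_of_injective hf (by decide) (by decide)
  have hsq : ∀ g, g * g = a 2 → f g * f g = (-1 : K) • 1 := fun g hg => by
    rw [← map_mul, hg, hz, neg_one_smul]
  let B : Basis D (-1 : K) 0 (-1) := .ofAnticomm (f (a 1)) (f (xa 0))
    (hsq _ (by decide)) (hsq _ (by decide))
    (by rw [← map_mul, show xa 0 * a 1 = a 2 * (a 1 * xa 0) by decide, map_mul, hz, neg_one_mul,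
      map_mul])
  refine B.nonempty_adjoin_algEquiv (by norm_num) (by norm_num) ?_
    (Algebra.subset_adjoin ⟨_, rfl⟩) (Algebra.subset_adjoin ⟨_, rfl⟩)
  exact f.range_subset_of_closure_eq_top (closure_a_one_xa_zero 2)
    (Set.pair_subset B.i_mem_range_liftHom B.j_mem_range_liftHom)

open SpecialLinearGroupZMod3 in
theorem nonempty_adjoin_range_algEquiv_of_specialLinearGroup
    (f : Matrix.SpecialLinearGroup (Fin 2) (ZMod 3) →* D) (hf : Function.Injective f) :
    Nonempty (Algebra.adjoin K (Set.range f) ≃ₐ[K] ℍ[K,-1,-1]) := by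
  have hz : f (-1) = -1 := f.map_eq_neg_one_of_injective hf (by decide) (by decide)
  have hsq : ∀ g, g * g = -1 → f g * f g = (-1 : K) • 1 := fun g hg => by
    rw [← map_mul, hg, hz, neg_one_smul]
  let B : Basis D (-1 : K) 0 (-1) := .ofAnticomm (f i) (f j)
    (hsq _ (by decide)) (hsq _ (by decide))
    (by rw [← map_mul, show j * i = -1 * (i * j) by decide, map_mul, hz, neg_one_mul, map_mul])
  have hw : f w ∈ B.liftHom.range := by
    refine B.mem_range_liftHom_of_pow_three_eq_one ?_ ?_ ?_ ?_
    · rw [← map_pow, show w ^ 3 = 1 by decide, map_one]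
    · exact (map_ne_one_iff f hf).2 (by decide)
    · change f w * f i = f j * f w
      rw [← map_mul, ← map_mul, show w * i = j * w by decide]
    · change f w * f j = f i * f j * f w
      rw [← map_mul, ← map_mul, ← map_mul, show w * j = i * j * w by decide]
  refine B.nonempty_adjoin_algEquiv (by norm_num) (by norm_num) ?_
    (Algebra.subset_adjoin ⟨_, rfl⟩) (Algebra.subset_adjoin ⟨_, rfl⟩)
  exact f.range_subset_of_closure_eq_top closure_i_j_w
    (Set.insert_subset B.i_mem_range_liftHom (Set.pair_subset B.j_mem_range_liftHom hw))

open QuaternionGroup in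
theorem nonempty_adjoin_range_algEquiv_of_quaternionGroup_three (f : QuaternionGroup 3 →* D)
    (hf : Function.Injective f) :
    Nonempty (Algebra.adjoin K (Set.range f) ≃ₐ[K] ℍ[K,-1,-3]) := by
  have hz : f (a 3) = -1 := f.map_eq_neg_one_of_injective hf (by decide) (by decide)
  set x := f (xa 0)
  set ω := f (a 4)
  have hω : ω ^ 2 + ω + 1 = 0 := sq_add_self_add_one_eq_zero
    (by rw [← map_pow, show a 4 ^ 3 = 1 by decide, map_one])
    ((map_ne_one_iff f hf).2 (by decide))
  have hxω : x * ω = (-1 - ω) * x := by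
    have hω2 : -1 - ω = ω ^ 2 := by rw [← sub_eq_zero, ← neg_eq_zero, ← hω]; noncomm_ring
    rw [hω2, ← map_pow, ← map_mul, ← map_mul, show xa 0 * a 4 = a 4 ^ 2 * xa 0 by decide]
  have hx : x * x = (-1 : K) • 1 := by
    rw [← map_mul, show xa 0 * xa 0 = a 3 by decide, hz, neg_one_smul]
  have hj : (2 * ω + 1) * (2 * ω + 1) = (-3 : K) • 1 := by
    rw [← sq, two_mul_add_one_sq hω, neg_smul, ← Algebra.algebraMap_eq_smul_one, map_ofNat]
  have hjx : (2 * ω + 1) * x = -(x * (2 * ω + 1)) := by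
    calc (2 * ω + 1) * x = 2 * ω * x + x := by noncomm_ring
      _ = -(2 * ((-1 - ω) * x) + x) := by noncomm_ring
      _ = -(x * (2 * ω + 1)) := by rw [← hxω]; noncomm_ring
  let B : Basis D (-1 : K) 0 (-3) := .ofAnticomm x (2 * ω + 1) hx hj hjx
  have hω_mem : ω ∈ B.liftHom.range := Subalgebra.mem_of_two_mul_add_one_mem B.j_mem_range_liftHom
  have ha₁ : f (a 1) = -ω := by rw [show a 1 = a 3 * a 4 by decide, map_mul, hz, neg_one_mul]
  have hω_adj : ω ∈ Algebra.adjoin K (Set.range f) := Algebra.subset_adjoin ⟨_, rfl⟩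
  refine B.nonempty_adjoin_algEquiv (by norm_num) (by norm_num) ?_
    (Algebra.subset_adjoin ⟨_, rfl⟩)
    (add_mem (mul_mem (ofNat_mem _ 2) hω_adj) (one_mem _))
  exact f.range_subset_of_closure_eq_top (closure_a_one_xa_zero 3)
    (Set.pair_subset (show f (a 1) ∈ _ from ha₁ ▸ neg_mem hω_mem) B.i_mem_range_liftHom)

end Cases

theorem span_of_finite_subgroup_of_division_algebra_general
    (D : Type*) [DivisionRing D] [Algebra ℚ D]
    (G : Subgroup Dˣ) :
    ((Nonempty (↥G ≃* QuaternionGroup 2) ∨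
        Nonempty (↥G ≃* Matrix.SpecialLinearGroup (Fin 2) (ZMod 3))) →
      Nonempty (↥(Algebra.adjoin ℚ ((fun u : Dˣ => (u : D)) '' (G : Set Dˣ)))
        ≃ₐ[ℚ] ℍ[ℚ, -1, -1])) ∧
    (Nonempty (↥G ≃* QuaternionGroup 3) →
      Nonempty (↥(Algebra.adjoin ℚ ((fun u : Dˣ => (u : D)) '' (G : Set Dˣ)))
        ≃ₐ[ℚ] ℍ[ℚ, -1, -3])) := by
  refine ⟨?_, ?_⟩
  · rintro (⟨⟨e⟩⟩ | ⟨⟨e⟩⟩)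
    · obtain ⟨f, hf, hrange⟩ := G.exists_injective_range_eq_image_coe e
      exact hrange ▸ nonempty_adjoin_range_algEquiv_of_quaternionGroup_two f hf
    · obtain ⟨f, hf, hrange⟩ := G.exists_injective_range_eq_image_coe e
      exact hrange ▸ nonempty_adjoin_range_algEquiv_of_specialLinearGroup f hf
  · rintro ⟨e⟩
    obtain ⟨f, hf, hrange⟩ := G.exists_injective_range_eq_image_coe e
    exact hrange ▸ nonempty_adjoin_range_algEquiv_of_quaternionGroup_three f hf

/-- Let `D` be a finite-dimensional division `ℚ`-algebra and `G` a finite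
subgroup of `Dˣ`. If `G ≅ Q₈` or `G ≅ SL(2,3)` then the `ℚ`-subalgebra of `D` generated by
`G` is isomorphic to `ℍ[ℚ,-1,-1]`; if `G` is the dicyclic group of order 12 then it is
isomorphic to `ℍ[ℚ,-1,-3]`. -/
theorem span_of_finite_subgroup_of_division_algebra
    (D : Type*) [DivisionRing D] [Algebra ℚ D] [FiniteDimensional ℚ D]
    (G : Subgroup Dˣ) (hG : Finite ↥G) :
    ((Nonempty (↥G ≃* QuaternionGroup 2) ∨
        Nonempty (↥G ≃* Matrix.SpecialLinearGroup (Fin 2) (ZMod 3))) →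
      Nonempty (↥(Algebra.adjoin ℚ ((fun u : Dˣ => (u : D)) '' (G : Set Dˣ)))
        ≃ₐ[ℚ] ℍ[ℚ, -1, -1])) ∧
    (Nonempty (↥G ≃* QuaternionGroup 3) →
      Nonempty (↥(Algebra.adjoin ℚ ((fun u : Dˣ => (u : D)) '' (G : Set Dˣ)))
        ≃ₐ[ℚ] ℍ[ℚ, -1, -3])) :=
  span_of_finite_subgroup_of_division_algebra_general D G
end
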